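/- Every degree-0 derivation of m (a derivation D of the Lie algebra m with D(m_p) ⊆ m_p for every weight p) is of the form a·(ad_g H)|_m + b·(ad_g E)|_m for unique real numbers a and b; in particular, the space of degree-0 derivations of m is 2-dimensional. -/

import Mathlib

noncomputable section

open scoped BigOperators

/-- The underlying vector space of `gl₂(ℝ)`, with basis `Y, H, E, X` at indices `0,1,2,3`. -/
abbrev G2 : Type := Fin 4 → ℝ

/-- The underlying vector space of the Heisenberg algebra `heis_{2n-5}`:
coefficients of `ε_1, …, ε_{2n-6}` together with the coefficient of `η`. -/
abbrev Hs (n : ℕ) : Type := (Fin (2*n-6) → ℝ) × ℝ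

/-- The underlying vector space of `g = gl₂(ℝ) ⋉ heis_{2n-5}`. -/
abbrev Gg (n : ℕ) : Type := G2 × Hs n

/-- The basis vector `ε_p` (1-based index `p`). -/
def epsV (n : ℕ) (p : ℕ) : Hs n := (fun i => if i.val + 1 = p then 1 else 0, 0)

/-- The central basis vector `η`. -/
def etaV (n : ℕ) : Hs n := (0, 1)

/-- The Heisenberg bracket, encoding `[ε_i, ε_{2n-5-i}] = (-1)^i η`. -/
def heisBr (n : ℕ) (x y : Hs n) : Hs n :=
  (0, ∑ i : Fin (2*n-6), (-1 : ℝ)^(i.val+1) * x.1 i * y.1 i.rev)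

/-- The `gl₂(ℝ)` bracket: `[X,Y]=H`, `[H,X]=2X`, `[H,Y]=-2Y`, and `E` is central. -/
def gl2Br (a b : G2) : G2 :=
  ![-2*(a 1 * b 0 - a 0 * b 1), a 3 * b 0 - a 0 * b 3, 0, 2*(a 1 * b 3 - a 3 * b 1)]

/-- The map `φ : gl₂(ℝ) → End(heis_{2n-5})` from the paper. -/
def phi (n : ℕ) (a : G2) (v : Hs n) : Hs n :=
  (fun i =>
      a 1 * (2*(i.val:ℝ) + 7 - 2*(n:ℝ)) * v.1 i
    + a 2 * v.1 i
    + a 3 * (if h : 0 < i.val then v.1 ⟨i.val - 1, by have := i.isLt; omega⟩ else 0)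
    + a 0 * (((i.val:ℝ)+1) * (2*(n:ℝ) - 7 - (i.val:ℝ))) *
        (if h : i.val + 1 < 2*n-6 then v.1 ⟨i.val+1, h⟩ else 0),
   2 * a 2 * v.2)

/-- The bracket of the semidirect product `g = gl₂(ℝ) ⋉_φ heis_{2n-5}`. -/
def gBr (n : ℕ) (x y : Gg n) : Gg n :=
  (gl2Br x.1 y.1, phi n x.1 y.2 - phi n y.1 x.2 + heisBr n x.2 y.2)

def bY (n : ℕ) : Gg n := (![1,0,0,0], 0)
def bH (n : ℕ) : Gg n := (![0,1,0,0], 0)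
def bE (n : ℕ) : Gg n := (![0,0,1,0], 0)
def bX (n : ℕ) : Gg n := (![0,0,0,1], 0)
def bEps (n : ℕ) (p : ℕ) : Gg n := (0, epsV n p)
def bEta (n : ℕ) : Gg n := (0, etaV n)

/-- The weight-`w` graded component of `g` in the grading of `s^{k,n}`: the span of the
basis elements of weight `w`, where `wght Y = 1`, `wght H = wght E = 0`, `wght X = -1`,
`wght ε_p = n-4-k-p`, `wght η = -3-2k`. -/
def gComp (n k : ℕ) (w : ℤ) : Submodule ℝ (Gg n) :=
  Submodule.span ℝ {v : Gg n |
    (v = bY n ∧ w = 1) ∨ ((v = bH n ∨ v = bE n) ∧ w = 0) ∨ (v = bX n ∧ w = -1) ∨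
    (∃ p : ℕ, 1 ≤ p ∧ p ≤ 2*n-6 ∧ v = bEps n p ∧ w = (n:ℤ) - 4 - (k:ℤ) - (p:ℤ)) ∨
    (v = bEta n ∧ w = -3 - 2*(k:ℤ))}

/-- The negative part `m = s^{k,n}` of `g` (for `0 ≤ k ≤ n-4`): the span of the basis
elements of negative weight, i.e. of `X`, `ε_p` for `n-3-k ≤ p ≤ 2n-6`, and `η`. -/
def mSub (n k : ℕ) : Submodule ℝ (Gg n) where
  carrier := {x | x.1 0 = 0 ∧ x.1 1 = 0 ∧ x.1 2 = 0 ∧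
    ∀ i : Fin (2*n-6), ((i.val:ℤ) + 1 < (n:ℤ) - 3 - (k:ℤ) → x.2.1 i = 0)}
  add_mem' := by
    rintro a b ⟨ha0, ha1, ha2, ha3⟩ ⟨hb0, hb1, hb2, hb3⟩
    exact ⟨by simp [ha0, hb0], by simp [ha1, hb1], by simp [ha2, hb2],
      fun i hi => by simp [ha3 i hi, hb3 i hi]⟩
  zero_mem' := ⟨rfl, rfl, rfl, fun i _ => rfl⟩
  smul_mem' := by
    rintro c a ⟨ha0, ha1, ha2, ha3⟩
    exact ⟨by simp [ha0], by simp [ha1], by simp [ha2], fun i hi => by simp [ha3 i hi]⟩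

/-- The non-negative part `g⁰` of `g` in the grading of `s^{k,n}`. -/
def g0Sub (n k : ℕ) : Submodule ℝ (Gg n) where
  carrier := {x | x.1 3 = 0 ∧ x.2.2 = 0 ∧
    ∀ i : Fin (2*n-6), ((n:ℤ) - 3 - (k:ℤ) ≤ (i.val:ℤ) + 1 → x.2.1 i = 0)}
  add_mem' := by
    rintro a b ⟨ha0, ha1, ha3⟩ ⟨hb0, hb1, hb3⟩
    exact ⟨by simp [ha0, hb0], by simp [ha1, hb1], fun i hi => by simp [ha3 i hi, hb3 i hi]⟩
  zero_mem' := ⟨rfl, rfl, fun i _ => rfl⟩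
  smul_mem' := by
    rintro c a ⟨ha0, ha1, ha3⟩
    exact ⟨by simp [ha0], by simp [ha1], fun i hi => by simp [ha3 i hi]⟩

/-- The negative part `m` of `g`, as a type. -/
abbrev MT (n k : ℕ) := ↥(mSub n k)

/-- The projection `π_m : g → m` along `g⁰`. -/
def Pm (n k : ℕ) (x : Gg n) : Gg n :=
  (![0, 0, 0, x.1 3],
   (fun i => if (n:ℤ) - 3 - (k:ℤ) ≤ (i.val:ℤ) + 1 then x.2.1 i else 0, x.2.2))

lemma Pm_mem (n k : ℕ) (x : Gg n) : Pm n k x ∈ mSub n k := by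
  refine ⟨?_, ?_, ?_, fun i hi => ?_⟩
  · simp [Pm]
  · simp [Pm]
  · simp [Pm]
  · show (if (n:ℤ) - 3 - (k:ℤ) ≤ (i.val:ℤ) + 1 then x.2.1 i else 0) = 0
    rw [if_neg (by omega)]

/-- The projection `π_m : g → m`, viewed as a map into `m`. -/
def ptoM (n k : ℕ) (x : Gg n) : MT n k := ⟨Pm n k x, Pm_mem n k x⟩

/-- The Lie bracket of `m` (the bracket of `g` restricted to `m`; since `m` is closed
under the bracket, composing with the projection `π_m` does not change the value). -/
def mBrM (n k : ℕ) (x y : MT n k) : MT n k := ptoM n k (gBr n x.1 y.1)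

/-- `ψ` is an ℝ-linear map `m → g`, i.e. an element of `C¹(m,g)`. -/
def IsLin1 (n k : ℕ) (ψ : MT n k → Gg n) : Prop :=
  (∀ x y, ψ (x + y) = ψ x + ψ y) ∧ ∀ (c : ℝ) (x), ψ (c • x) = c • ψ x

/-- `ψ` is an alternating ℝ-bilinear map `m × m → g`, i.e. an element of `C²(m,g)`. -/
def IsAlt2 (n k : ℕ) (ψ : MT n k → MT n k → Gg n) : Prop :=
  (∀ y, IsLin1 n k (fun x => ψ x y)) ∧ (∀ x, IsLin1 n k (ψ x)) ∧ ∀ x, ψ x x = 0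

/-- The coboundary `∂ : C¹(m,g) → C²(m,g)`,
`(∂φ)(x,y) = [x, φ y] - [y, φ x] + φ [x,y]`. -/
def cobound (n k : ℕ) (φ : MT n k → Gg n) : MT n k → MT n k → Gg n :=
  fun x y => gBr n x.1 (φ y) - gBr n y.1 (φ x) + φ (mBrM n k x y)

/-- A 1-cochain is homogeneous of weight `w` if `ψ(g_p) ⊆ g_{p+w}` for all `p < 0`. -/
def Homog1 (n k : ℕ) (w : ℤ) (ψ : MT n k → Gg n) : Prop :=
  ∀ p : ℤ, p < 0 → ∀ x : MT n k, (x : Gg n) ∈ gComp n k p → ψ x ∈ gComp n k (p + w)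

/-- A 2-cochain is homogeneous of weight `w` if `ψ(g_p × g_q) ⊆ g_{p+q+w}` for `p,q < 0`. -/
def Homog2 (n k : ℕ) (w : ℤ) (ψ : MT n k → MT n k → Gg n) : Prop :=
  ∀ p q : ℤ, p < 0 → q < 0 → ∀ x y : MT n k,
    (x : Gg n) ∈ gComp n k p → (y : Gg n) ∈ gComp n k q → ψ x y ∈ gComp n k (p + q + w)

/-- `C¹₊(m,g)`: the span of the homogeneous 1-cochains of positive weight. -/
def C1plus (n k : ℕ) : Submodule ℝ (MT n k → Gg n) :=
  Submodule.span ℝ {ψ | IsLin1 n k ψ ∧ ∃ w : ℤ, 0 < w ∧ Homog1 n k w ψ}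

/-- `C²₊(m,g)`: the span of the homogeneous alternating 2-cochains of positive weight. -/
def C2plus (n k : ℕ) : Submodule ℝ (MT n k → MT n k → Gg n) :=
  Submodule.span ℝ {ψ | IsAlt2 n k ψ ∧ ∃ w : ℤ, 0 < w ∧ Homog2 n k w ψ}

/-- The image `∂(C¹₊(m,g)) ⊆ C²(m,g)`. -/
def imDel (n k : ℕ) : Submodule ℝ (MT n k → MT n k → Gg n) :=
  Submodule.span ℝ (cobound n k '' {φ | φ ∈ C1plus n k})

/-- The action of `A ∈ g⁰` on 1-cochains: `(A·ψ)(x) = [A, ψ x] - ψ(π_m [A, x])`. -/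
def act1 (n k : ℕ) (A : Gg n) (ψ : MT n k → Gg n) : MT n k → Gg n :=
  fun x => gBr n A (ψ x) - ψ (ptoM n k (gBr n A x.1))

/-- The action of `A ∈ g⁰` on 2-cochains:
`(A·ψ)(x,y) = [A, ψ x y] - ψ(π_m [A, x]) y - ψ x (π_m [A, y])`. -/
def act2 (n k : ℕ) (A : Gg n) (ψ : MT n k → MT n k → Gg n) : MT n k → MT n k → Gg n :=
  fun x y => gBr n A (ψ x y) - ψ (ptoM n k (gBr n A x.1)) y - ψ x (ptoM n k (gBr n A y.1))

/-- The coefficient of `ε_p` (the dual functional `ε*_p`). -/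
def epsCoef (n : ℕ) (p : ℕ) (x : Gg n) : ℝ :=
  if h : 1 ≤ p ∧ p ≤ 2*n-6 then x.2.1 ⟨p-1, by omega⟩ else 0

/-- The 1-cochain `ε*_{n-3-k} ⊗ ε_{2n-6}`. -/
def cA (n k : ℕ) : MT n k → Gg n := fun x => epsCoef n (n-3-k) x.1 • bEps n (2*n-6)

/-- The 1-cochain `X* ⊗ ε_{n-4-k}`. -/
def cB (n k : ℕ) : MT n k → Gg n := fun x => (x : Gg n).1 3 • bEps n (n-4-k)

/-- The 2-cochain `X* ∧ ε*_{n-1+k} ⊗ η`. -/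
def cC (n k : ℕ) : MT n k → MT n k → Gg n := fun x y =>
  ((x : Gg n).1 3 * epsCoef n (n-1+k) y.1 - (y : Gg n).1 3 * epsCoef n (n-1+k) x.1) • bEta n

/-- The 2-cochain `ε*_{n-3-k} ∧ η* ⊗ ε_{2n-6}`. -/
def cD (n k : ℕ) : MT n k → MT n k → Gg n := fun x y =>
  (epsCoef n (n-3-k) x.1 * (y : Gg n).2.2 - epsCoef n (n-3-k) y.1 * (x : Gg n).2.2) • bEps n (2*n-6)

/-- `D : m → m` is an ℝ-linear map. -/
def IsLinM (n k : ℕ) (D : MT n k → MT n k) : Prop :=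
  (∀ x y, D (x + y) = D x + D y) ∧ ∀ (c : ℝ) (x), D (c • x) = c • D x

/-! The grading forces `D X, D ε₁ ∈ span {X, ε₁}`; write `D X = α X + β ε₁` and
`D ε₁ = γ X + δ ε₁`. All other basis vectors are brackets of these: `ε_{p+1} = [X, ε_p]` and
`η = [ε_{2n-6}, ε₁]`, so the Leibniz rule determines `D` from `α, β, γ, δ`. The relations
`[ε₁, ε₂] = 0` and `[X, ε_{2n-6}] = 0` force `γ = 0` and `β = 0`, after which
`D ε_p = (δ + (p-1)α) ε_p` and `D η = (2δ + (2n-7)α) η`: this is `(α/2) ad H + b ad E` with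
`b = δ + (2n-7)α/2`. Uniqueness is read off at `X` and `ε₁`. -/

variable {n : ℕ}

lemma gl2Br_add_left (a a' b : G2) : gl2Br (a + a') b = gl2Br a b + gl2Br a' b := by
  ext j; fin_cases j <;> simp [gl2Br] <;> ring
lemma gl2Br_add_right (a b b' : G2) : gl2Br a (b + b') = gl2Br a b + gl2Br a b' := by
  ext j; fin_cases j <;> simp [gl2Br] <;> ring
lemma gl2Br_smul_left (c : ℝ) (a b : G2) : gl2Br (c • a) b = c • gl2Br a b := by
  ext j; fin_cases j <;> simp [gl2Br] <;> ring
lemma gl2Br_smul_right (c : ℝ) (a b : G2) : gl2Br a (c • b) = c • gl2Br a b := by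
  ext j; fin_cases j <;> simp [gl2Br] <;> ring

lemma phi_add_left (a a' : G2) (v : Hs n) : phi n (a + a') v = phi n a v + phi n a' v := by
  ext i <;> simp only [phi, Prod.fst_add, Prod.snd_add, Pi.add_apply] <;> ring
lemma phi_add_right (a : G2) (v w : Hs n) : phi n a (v + w) = phi n a v + phi n a w := by
  ext i <;> simp only [phi, Prod.fst_add, Prod.snd_add, Pi.add_apply] <;> (try split_ifs) <;> ring
lemma phi_smul_left (c : ℝ) (a : G2) (v : Hs n) : phi n (c • a) v = c • phi n a v := by
  ext i <;> simp only [phi, Prod.smul_fst, Prod.smul_snd, Pi.smul_apply, smul_eq_mul] <;> ring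
lemma phi_smul_right (c : ℝ) (a : G2) (v : Hs n) : phi n a (c • v) = c • phi n a v := by
  ext i <;> simp only [phi, Prod.smul_fst, Prod.smul_snd, Pi.smul_apply, smul_eq_mul] <;>
    (try split_ifs) <;> ring

lemma heisBr_add_left (x x' y : Hs n) : heisBr n (x + x') y = heisBr n x y + heisBr n x' y := by
  ext <;> simp [heisBr, ← Finset.sum_add_distrib, mul_add, add_mul]
lemma heisBr_add_right (x y y' : Hs n) : heisBr n x (y + y') = heisBr n x y + heisBr n x y' := by
  ext <;> simp [heisBr, ← Finset.sum_add_distrib, mul_add]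
lemma heisBr_smul_left (c : ℝ) (x y : Hs n) : heisBr n (c • x) y = c • heisBr n x y := by
  ext <;> simp [heisBr, Finset.mul_sum]; exact Finset.sum_congr rfl fun i _ => by ring
lemma heisBr_smul_right (c : ℝ) (x y : Hs n) : heisBr n x (c • y) = c • heisBr n x y := by
  ext <;> simp [heisBr, Finset.mul_sum]; exact Finset.sum_congr rfl fun i _ => by ring

lemma gBr_add_left (x x' y : Gg n) : gBr n (x + x') y = gBr n x y + gBr n x' y := by
  ext1
  · exact gl2Br_add_left ..
  · simp only [gBr, Prod.fst_add, Prod.snd_add, phi_add_left, phi_add_right, heisBr_add_left]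
    abel
lemma gBr_add_right (x y y' : Gg n) : gBr n x (y + y') = gBr n x y + gBr n x y' := by
  ext1
  · exact gl2Br_add_right ..
  · simp only [gBr, Prod.fst_add, Prod.snd_add, phi_add_left, phi_add_right, heisBr_add_right]
    abel
lemma gBr_smul_left (c : ℝ) (x y : Gg n) : gBr n (c • x) y = c • gBr n x y := by
  ext1
  · exact gl2Br_smul_left ..
  · simp only [gBr, Prod.smul_fst, Prod.smul_snd, phi_smul_left, phi_smul_right,
      heisBr_smul_left, smul_add, smul_sub]
lemma gBr_smul_right (c : ℝ) (x y : Gg n) : gBr n x (c • y) = c • gBr n x y := by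
  ext1
  · exact gl2Br_smul_right ..
  · simp only [gBr, Prod.smul_fst, Prod.smul_snd, phi_smul_left, phi_smul_right,
      heisBr_smul_right, smul_add, smul_sub]

section

variable (n)

lemma mem_mSub_of (x : Gg n) (h0 : x.1 0 = 0) (h1 : x.1 1 = 0) (h2 : x.1 2 = 0) :
    x ∈ mSub n (n-4) :=
  ⟨h0, h1, h2, fun i hi => absurd hi (by omega)⟩

def mX : MT n (n-4) := ⟨bX n, mem_mSub_of n _ rfl rfl rfl⟩
def mEps (p : ℕ) : MT n (n-4) := ⟨bEps n p, mem_mSub_of n _ rfl rfl rfl⟩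
def mEta : MT n (n-4) := ⟨bEta n, mem_mSub_of n _ rfl rfl rfl⟩

end

@[simp] lemma coe_mX : (mX n : Gg n) = bX n := rfl
@[simp] lemma coe_mEps (p : ℕ) : (mEps n p : Gg n) = bEps n p := rfl
@[simp] lemma coe_mEta : (mEta n : Gg n) = bEta n := rfl

lemma Pm_eq_self {x : Gg n} (h0 : x.1 0 = 0) (h1 : x.1 1 = 0) (h2 : x.1 2 = 0) :
    Pm n (n-4) x = x := by
  ext j
  · fin_cases j <;> simp [Pm, h0, h1, h2]
  · simp only [Pm]; rw [if_pos (by omega)]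
  · rfl

lemma coe_mBrM (x y : MT n (n-4)) : (mBrM n (n-4) x y : Gg n) = gBr n x y := by
  obtain ⟨hx0, hx1, -, -⟩ := x.2
  obtain ⟨hy0, hy1, -, -⟩ := y.2
  exact Pm_eq_self (by simp [gBr, gl2Br, hx0, hx1, hy0, hy1]) (by simp [gBr, gl2Br, hx0, hy0])
    (by simp [gBr, gl2Br])

lemma bEps_eq_zero {p : ℕ} (hp : 2*n-6 < p) : bEps n p = 0 := by
  ext i <;> simp [bEps, epsV]; omega

lemma bX_ne_zero : bX n ≠ 0 := fun h => by simpa [bX] using congrArg (·.1 3) h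

lemma bEps_ne_zero {p : ℕ} (hp1 : 1 ≤ p) (hp2 : p ≤ 2*n-6) : bEps n p ≠ 0 := fun h => by
  have := congrArg (·.2.1 ⟨p-1, by omega⟩) h
  simp [bEps, epsV] at this
  omega

lemma bEta_ne_zero : bEta n ≠ 0 := fun h => by simpa [bEta, etaV] using congrArg (·.2.2) h

lemma gBr_X_X : gBr n (bX n) (bX n) = 0 := by
  ext j <;> simp [gBr, gl2Br, bX, phi, heisBr]
  fin_cases j <;> rfl

-- Since `bEps n p = 0` for `p > 2n-6`, this includes `[X, ε_{2n-6}] = 0`.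
lemma gBr_X_eps {p : ℕ} (hp : 1 ≤ p) : gBr n (bX n) (bEps n p) = bEps n (p+1) := by
  ext j
  · fin_cases j <;> simp [gBr, gl2Br, bX, bEps]
  · simp [gBr, bX, bEps, phi, heisBr, epsV]
    split_ifs <;> first | rfl | omega
  · simp [gBr, bX, bEps, phi, heisBr, epsV]

lemma gBr_eps_eps_of_add_ne {p q : ℕ} (hpq : p + q ≠ 2*n-5) :
    gBr n (bEps n p) (bEps n q) = 0 := by
  ext j
  · fin_cases j <;> simp [gBr, gl2Br, bEps]
  · simp [gBr, bEps, phi, heisBr, epsV]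
  · simp [gBr, bEps, phi, heisBr, epsV]
    refine Finset.sum_eq_zero fun i _ => ?_
    split_ifs <;> first | rfl | omega

lemma gBr_eps_eps_of_add_eq {p q : ℕ} (hp : 1 ≤ p) (hq : 1 ≤ q) (hpq : p + q = 2*n-5) :
    gBr n (bEps n p) (bEps n q) = (-1 : ℝ)^p • bEta n := by
  ext j
  · fin_cases j <;> simp [gBr, gl2Br, bEps, bEta]
  · simp [gBr, bEps, bEta, etaV, phi, heisBr, epsV]
  · simp [gBr, bEps, bEta, etaV, phi, heisBr, epsV]
    rw [Finset.sum_eq_single ⟨p-1, by omega⟩]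
    · simp only
      rw [if_pos (by omega), if_pos (by omega), Nat.sub_add_cancel hp]
    · intro i _ hi
      replace hi : i.val ≠ p - 1 := fun h => hi (Fin.ext h)
      split_ifs <;> first | rfl | omega
    · simp

lemma gBr_H_X : gBr n (bH n) (bX n) = (2:ℝ) • bX n := by
  ext j <;> simp [gBr, gl2Br, bH, bX, phi, heisBr]

lemma gBr_H_eps (p : ℕ) :
    gBr n (bH n) (bEps n p) = (2*(p:ℝ) + 5 - 2*(n:ℝ)) • bEps n p := by
  ext j <;> simp [gBr, gl2Br, bH, bEps, phi, heisBr, epsV]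
  · fin_cases j <;> rfl
  · split_ifs with h
    · rw [← h]; push_cast; ring
    · rfl

lemma gBr_H_eta : gBr n (bH n) (bEta n) = 0 := by
  ext j <;> simp [gBr, gl2Br, bH, bEta, etaV, phi, heisBr]
  fin_cases j <;> rfl

lemma gBr_E_X : gBr n (bE n) (bX n) = 0 := by
  ext j <;> simp [gBr, gl2Br, bE, bX, phi, heisBr]
  fin_cases j <;> rfl

lemma gBr_E_eps (p : ℕ) : gBr n (bE n) (bEps n p) = bEps n p := by
  ext j <;> simp [gBr, gl2Br, bE, bEps, phi, heisBr, epsV]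
  fin_cases j <;> rfl

lemma gBr_E_eta : gBr n (bE n) (bEta n) = (2:ℝ) • bEta n := by
  ext j <;> simp [gBr, gl2Br, bE, bEta, etaV, phi, heisBr]
  fin_cases j <;> rfl

lemma gComp_neg_one_le : gComp n (n-4) (-1) ≤ Submodule.span ℝ {bX n, bEps n 1} := by
  refine Submodule.span_le.mpr ?_
  rintro v (⟨-, h⟩ | ⟨-, h⟩ | ⟨rfl, -⟩ | ⟨p, hp1, -, rfl, h⟩ | ⟨-, h⟩)
  · omega
  · omega
  · exact Submodule.subset_span (by simp)
  · obtain rfl : p = 1 := by omega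
    exact Submodule.subset_span (by simp)
  · omega

lemma bX_mem_gComp : bX n ∈ gComp n (n-4) (-1) :=
  Submodule.subset_span (Or.inr (Or.inr (Or.inl ⟨rfl, rfl⟩)))

lemma bEps_one_mem_gComp (hn : 4 ≤ n) : bEps n 1 ∈ gComp n (n-4) (-1) :=
  Submodule.subset_span (Or.inr (Or.inr (Or.inr (Or.inl ⟨1, le_rfl, by omega, rfl, by omega⟩))))

lemma sum_repr_mSub (x : MT n (n-4)) :
    (x : Gg n).1 3 • mX n + ∑ i : Fin (2*n-6), (x : Gg n).2.1 i • mEps n (i.val + 1)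
      + (x : Gg n).2.2 • mEta n = x := by
  obtain ⟨h0, h1, h2, -⟩ := x.2
  apply Subtype.ext
  simp only [Submodule.coe_add, Submodule.coe_smul, Submodule.coe_sum, mX, mEps, mEta]
  ext j <;> simp [bX, bEps, bEta, epsV, etaV, Prod.fst_sum, Prod.snd_sum, Finset.sum_apply,
    Fin.val_inj]
  fin_cases j <;> simp [h0, h1, h2]

theorem linearMap_ext_mSub {M : Type*} [AddCommMonoid M] [Module ℝ M]
    {f g : MT n (n-4) →ₗ[ℝ] M} (hX : f (mX n) = g (mX n))
    (hε : ∀ p, 1 ≤ p → p ≤ 2*n-6 → f (mEps n p) = g (mEps n p))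
    (hη : f (mEta n) = g (mEta n)) : f = g := by
  ext x
  rw [← sum_repr_mSub x]
  simp only [map_add, map_sum, map_smul, hX, hη, hε _ (Nat.le_add_left 1 _) (Fin.is_lt _)]

lemma mEps_eq_zero {p : ℕ} (hp : 2*n-6 < p) : mEps n p = 0 := Subtype.ext (bEps_eq_zero hp)

lemma mBrM_mX_mEps {p : ℕ} (hp : 1 ≤ p) : mBrM n (n-4) (mX n) (mEps n p) = mEps n (p+1) :=
  Subtype.ext ((coe_mBrM _ _).trans (gBr_X_eps hp))

def IsDerivM (n k : ℕ) (D : MT n k → MT n k) : Prop :=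
  ∀ x y, D (mBrM n k x y) = mBrM n k (D x) y + mBrM n k x (D y)

@[simps]
def IsLinM.toLinearMap {k : ℕ} {D : MT n k → MT n k} (h : IsLinM n k D) :
    MT n k →ₗ[ℝ] MT n k where
  toFun := D
  map_add' := h.1
  map_smul' := h.2

variable (n) in
@[simps]
def adₗ (A : Gg n) : Gg n →ₗ[ℝ] Gg n where
  toFun := gBr n A
  map_add' := gBr_add_right A
  map_smul' c := gBr_smul_right c A

namespace IsDerivM

variable {D : MT n (n-4) → MT n (n-4)} {α β γ δ : ℝ}

lemma coe_apply_mBrM (hD : IsDerivM n (n-4) D) (x y : MT n (n-4)) :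
    (D (mBrM n (n-4) x y) : Gg n) = gBr n (D x) y + gBr n x (D y) := by
  rw [hD, Submodule.coe_add, coe_mBrM, coe_mBrM]

lemma coe_apply_mEps_succ (hD : IsDerivM n (n-4) D) {p : ℕ} (hp : 1 ≤ p) :
    (D (mEps n (p+1)) : Gg n) = gBr n (D (mX n)) (bEps n p) + gBr n (bX n) (D (mEps n p)) := by
  rw [← mBrM_mX_mEps hp, hD.coe_apply_mBrM, coe_mX, coe_mEps]

lemma coe_apply_mEps_two (hD : IsDerivM n (n-4) D)
    (hX : (D (mX n) : Gg n) = α • bX n + β • bEps n 1)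
    (h1 : (D (mEps n 1) : Gg n) = γ • bX n + δ • bEps n 1) :
    (D (mEps n 2) : Gg n) = (α + δ) • bEps n 2 := by
  rw [hD.coe_apply_mEps_succ le_rfl, hX, h1]
  simp only [gBr_add_left, gBr_add_right, gBr_smul_left, gBr_smul_right, gBr_X_X,
    gBr_X_eps le_rfl, gBr_eps_eps_of_add_ne (show 1 + 1 ≠ 2*n-5 by omega)]
  module

lemma eq_zero_of_coe_apply_mEps_one (hD : IsDerivM n (n-4) D) (hn : 5 ≤ n) (hD0 : D 0 = 0)
    (hX : (D (mX n) : Gg n) = α • bX n + β • bEps n 1)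
    (h1 : (D (mEps n 1) : Gg n) = γ • bX n + δ • bEps n 1) : γ = 0 := by
  have h12 : mBrM n (n-4) (mEps n 1) (mEps n 2) = 0 :=
    Subtype.ext ((coe_mBrM _ _).trans (gBr_eps_eps_of_add_ne (by omega)))
  have key := hD.coe_apply_mBrM (mEps n 1) (mEps n 2)
  rw [h12, hD0, h1, hD.coe_apply_mEps_two hX h1, coe_mEps, coe_mEps] at key
  simp only [gBr_add_left, gBr_smul_left, gBr_smul_right, gBr_X_eps one_le_two,
    gBr_eps_eps_of_add_ne (show 1 + 2 ≠ 2*n-5 by omega)] at key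
  simpa [bEps_ne_zero (n := n) (p := 3) (by norm_num) (by omega)] using key.symm

lemma coe_apply_mEps (hD : IsDerivM n (n-4) D)
    (hX : (D (mX n) : Gg n) = α • bX n + β • bEps n 1)
    (h1 : (D (mEps n 1) : Gg n) = δ • bEps n 1) {p : ℕ} (hp1 : 1 ≤ p) (hp2 : p ≤ 2*n-6) :
    (D (mEps n p) : Gg n) = (δ + ((p:ℝ) - 1) * α) • bEps n p := by
  induction p, hp1 using Nat.le_induction with
  | base => simpa using h1
  | succ p hp ih =>
    rw [hD.coe_apply_mEps_succ hp, hX, ih (by omega)]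
    simp only [gBr_add_left, gBr_smul_left, gBr_smul_right, gBr_X_eps hp,
      gBr_eps_eps_of_add_ne (show 1 + p ≠ 2*n-5 by omega)]
    push_cast
    module

lemma eq_zero_of_coe_apply_mX (hD : IsDerivM n (n-4) D) (hn : 4 ≤ n) (hD0 : D 0 = 0)
    (hX : (D (mX n) : Gg n) = α • bX n + β • bEps n 1)
    (h1 : (D (mEps n 1) : Gg n) = δ • bEps n 1) : β = 0 := by
  have key := hD.coe_apply_mEps_succ (p := 2*n-6) (by omega)
  rw [mEps_eq_zero (by omega), hD0, hX, hD.coe_apply_mEps hX h1 (by omega) le_rfl] at key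
  simp only [gBr_add_left, gBr_smul_left, gBr_smul_right, gBr_X_eps (show 1 ≤ 2*n-6 by omega),
    bEps_eq_zero (show 2*n-6 < 2*n-6+1 by omega),
    gBr_eps_eps_of_add_eq (n := n) le_rfl (show 1 ≤ 2*n-6 by omega) (by omega)] at key
  simpa [bEta_ne_zero] using key.symm

lemma coe_apply_mEta (hD : IsDerivM n (n-4) D) (hn : 4 ≤ n) {c : ℝ}
    (hc : (D (mEps n (2*n-6)) : Gg n) = c • bEps n (2*n-6))
    (h1 : (D (mEps n 1) : Gg n) = δ • bEps n 1) :
    (D (mEta n) : Gg n) = (c + δ) • bEta n := by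
  have hbr : gBr n (bEps n (2*n-6)) (bEps n 1) = bEta n := by
    rw [gBr_eps_eps_of_add_eq (by omega) le_rfl (by omega), Even.neg_one_pow ⟨n-3, by omega⟩,
      one_smul]
  have hη : mBrM n (n-4) (mEps n (2*n-6)) (mEps n 1) = mEta n :=
    Subtype.ext ((coe_mBrM _ _).trans hbr)
  rw [← hη, hD.coe_apply_mBrM, hc, h1, coe_mEps, coe_mEps, gBr_smul_left, gBr_smul_right, hbr,
    add_smul]

lemma exists_coe_apply_eq_smul_gBr_add_smul_gBr
    (hD : IsDerivM n (n-4) D) (hn : 5 ≤ n) (hlin : IsLinM n (n-4) D)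
    (hgrade : ∀ x : MT n (n-4),
      (x : Gg n) ∈ gComp n (n-4) (-1) → (D x : Gg n) ∈ gComp n (n-4) (-1)) :
    ∃ a b : ℝ, ∀ x : MT n (n-4),
      (D x : Gg n) = a • gBr n (bH n) (x : Gg n) + b • gBr n (bE n) (x : Gg n) := by
  have hD0 : D 0 = 0 := by simpa using hlin.2 0 0
  have hweight : ∀ x : MT n (n-4), (x : Gg n) ∈ gComp n (n-4) (-1) →
      ∃ a b : ℝ, (D x : Gg n) = a • bX n + b • bEps n 1 := fun x hx => by
    obtain ⟨a, b, h⟩ := Submodule.mem_span_pair.mp (gComp_neg_one_le (hgrade x hx))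
    exact ⟨a, b, h.symm⟩
  obtain ⟨α, β, hX⟩ := hweight (mX n) bX_mem_gComp
  obtain ⟨γ, δ, h1⟩ := hweight (mEps n 1) (bEps_one_mem_gComp (by omega))
  obtain rfl := hD.eq_zero_of_coe_apply_mEps_one hn hD0 hX h1
  rw [zero_smul, zero_add] at h1
  have hε : ∀ p, 1 ≤ p → p ≤ 2*n-6 →
      (D (mEps n p) : Gg n) = (δ + ((p:ℝ) - 1) * α) • bEps n p :=
    fun p => hD.coe_apply_mEps hX h1
  obtain rfl := hD.eq_zero_of_coe_apply_mX (by omega) hD0 hX h1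
  rw [zero_smul, add_zero] at hX
  have hη := hD.coe_apply_mEta (by omega) (hε _ (by omega) le_rfl) h1
  suffices h : (mSub n (n-4)).subtype ∘ₗ hlin.toLinearMap =
      ((α / 2) • adₗ n (bH n) + (δ + (2 * n - 7) / 2 * α) • adₗ n (bE n)) ∘ₗ
        (mSub n (n-4)).subtype from ⟨_, _, LinearMap.congr_fun h⟩
  refine linearMap_ext_mSub ?_ (fun p hp1 hp2 => ?_) ?_ <;>
    simp only [LinearMap.comp_apply, LinearMap.add_apply, LinearMap.smul_apply,
      Submodule.subtype_apply, IsLinM.toLinearMap_apply, adₗ_apply, coe_mX, coe_mEps, coe_mEta]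
  · rw [hX, gBr_H_X, gBr_E_X]
    module
  · rw [hε p hp1 hp2, gBr_H_eps, gBr_E_eps]
    module
  · rw [hη, gBr_H_eta, gBr_E_eta, Nat.cast_sub (by omega)]
    push_cast
    module

end IsDerivM

lemma eq_of_smul_gBr_H_add_smul_gBr_E_eq (hn : 4 ≤ n) {a b a' b' : ℝ}
    (h : ∀ x : MT n (n-4), a • gBr n (bH n) (x : Gg n) + b • gBr n (bE n) (x : Gg n)
      = a' • gBr n (bH n) (x : Gg n) + b' • gBr n (bE n) (x : Gg n)) :
    (a, b) = (a', b') := by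
  have hX := h (mX n)
  have h1 := h (mEps n 1)
  simp only [coe_mX, coe_mEps, gBr_H_X, gBr_E_X, gBr_H_eps, gBr_E_eps, smul_zero, add_zero,
    smul_smul, ← add_smul] at hX h1
  have ha := smul_left_injective ℝ bX_ne_zero hX
  have hb := smul_left_injective ℝ (bEps_ne_zero (n := n) le_rfl (by omega)) h1
  obtain rfl : a = a' := by linarith
  simp only [Prod.mk.injEq, true_and]
  linarith

/-- with the grading `wght X = -1`, `wght ε_i = -i`, `wght η = 5-2n`
(the case `k = n-4`), every degree-0 derivation of `m` (a linear map `D : m → m` with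
`D(m_p) ⊆ m_p` for every weight `p`, satisfying the Leibniz rule) equals
`a·(ad H)|_m + b·(ad E)|_m` for a unique pair of reals `(a,b)`; in particular the space
of degree-0 derivations of `m` is 2-dimensional. -/
theorem degree_zero_derivations (n : ℕ) (hn : 6 ≤ n)
    (D : MT n (n-4) → MT n (n-4)) (hlin : IsLinM n (n-4) D)
    (hgrade : ∀ w : ℤ, ∀ x : MT n (n-4),
      (x : Gg n) ∈ gComp n (n-4) w → (D x : Gg n) ∈ gComp n (n-4) w)
    (hleib : ∀ x y, D (mBrM n (n-4) x y) = mBrM n (n-4) (D x) y + mBrM n (n-4) x (D y)) :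
    ∃! ab : ℝ × ℝ, ∀ x : MT n (n-4),
      (D x : Gg n) = ab.1 • gBr n (bH n) (x : Gg n) + ab.2 • gBr n (bE n) (x : Gg n) := by
  obtain ⟨a, b, hab⟩ :=
    IsDerivM.exists_coe_apply_eq_smul_gBr_add_smul_gBr (D := D) hleib (by omega) hlin (hgrade (-1))
  exact ⟨(a, b), hab, fun ab hab' =>
    eq_of_smul_gBr_H_add_smul_gBr_E_eq (by omega) fun x => (hab' x).symm.trans (hab x)⟩
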